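/- Let G be a connected weighted graph and s,t vertices. Let u₁ and u₂ be vertices on π(s,t) with u₁ appearing no later than u₂ along the path from s to t, and let v₁, v₂ be vertices joined in G to u₁ and u₂ respectively by edges of weight at most W(s,t). Then d_G(s,u₁) + w(u₁v₁) + d_G(v₁,v₂) + w(u₂v₂) + d_G(u₂,t) ≤ d_G(s,t) + 4·W(s,t). In particular, if a subgraph H contains shortest paths of G from s to u₁, from v₁ to v₂, and from u₂ to t together with the edges u₁v₁ and u₂v₂, then d_H(s,t) ≤ d_G(s,t) + 4·W(s,t). -/

import Mathlib

open scoped ENNReal Classical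

/-- The total weight of a walk: the sum of the weights of its edges. -/
noncomputable def walkWeight {V : Type} (G : SimpleGraph V) (w : Sym2 V → ℝ≥0∞)
    {s t : V} (p : G.Walk s t) : ℝ≥0∞ :=
  (p.edges.map w).sum

/-- Shortest-path distance in the weighted graph `(G, w)`, equal to `⊤` if there is no path. -/
noncomputable def gdist {V : Type} (G : SimpleGraph V) (w : Sym2 V → ℝ≥0∞)
    (s t : V) : ℝ≥0∞ :=
  ⨅ p : G.Walk s t, walkWeight G w p

/-- The maximum edge weight along a walk (0 for the trivial walk). -/
noncomputable def maxEdge {V : Type} (G : SimpleGraph V) (w : Sym2 V → ℝ≥0∞)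
    {s t : V} (p : G.Walk s t) : ℝ≥0∞ :=
  (p.edges.map w).foldr max 0

/-- `π` assigns to each ordered vertex pair a shortest path: a walk whose total
weight equals the shortest-path distance. -/
def IsShortestPathScheme {V : Type} (G : SimpleGraph V) (w : Sym2 V → ℝ≥0∞)
    (π : (s t : V) → G.Walk s t) : Prop :=
  ∀ s t : V, walkWeight G w (π s t) = gdist G w s t

/-- The edge weights are positive and finite on all edges of `G`. -/
def PosWeights {V : Type} (G : SimpleGraph V) (w : Sym2 V → ℝ≥0∞) : Prop :=
  ∀ e ∈ G.edgeSet, 0 < w e ∧ w e ≠ ⊤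

/-!
The walk `v₁ – u₁ ⇝ u₂ – v₂`, with `u₁ ⇝ u₂` the middle segment of `π(s,t)`, shows
`d(v₁,v₂) ≤ d(u₁,u₂) + w(u₁v₁) + w(u₂v₂)`. Since `u₁, u₂` lie in order on a shortest path,
`d(s,u₁) + d(u₁,u₂) + d(u₂,t) = d(s,t)`, so the detour costs at most
`2 w(u₁v₁) + 2 w(u₂v₂) ≤ 4 W(s,t)`. Inside `H` the same pieces concatenate to an `s–t` walk,
so `d_H(s,t)` is at most the length of the detour.
-/

section

variable {V : Type} (G : SimpleGraph V) (w : Sym2 V → ℝ≥0∞)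

lemma walkWeight_append {a b c : V} (p : G.Walk a b) (q : G.Walk b c) :
    walkWeight G w (p.append q) = walkWeight G w p + walkWeight G w q := by
  simp [walkWeight, SimpleGraph.Walk.edges_append]

lemma gdist_le_walkWeight {a b : V} (p : G.Walk a b) : gdist G w a b ≤ walkWeight G w p :=
  iInf_le _ p

lemma gdist_triangle (a b c : V) : gdist G w a c ≤ gdist G w a b + gdist G w b c := by
  simp only [gdist, ENNReal.iInf_add, ENNReal.add_iInf]
  refine le_iInf₂ fun p q => ?_
  rw [← walkWeight_append]
  exact gdist_le_walkWeight G w _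

lemma gdist_le_weight {a b : V} (h : G.Adj a b) : gdist G w a b ≤ w s(a, b) := by
  simpa [walkWeight] using gdist_le_walkWeight G w (SimpleGraph.Walk.cons h .nil)

lemma gdist_le_weight_add_gdist_add_weight {a a' b b' : V} (ha : G.Adj a a') (hb : G.Adj b b') :
    gdist G w a b ≤ w s(a, a') + gdist G w a' b' + w s(b, b') :=
  calc gdist G w a b ≤ gdist G w a a' + gdist G w a' b' + gdist G w b' b :=
        (gdist_triangle G w a b' b).trans (add_le_add_left (gdist_triangle G w a a' b') _)
    _ ≤ w s(a, a') + gdist G w a' b' + w s(b, b') := by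
        rw [Sym2.eq_swap (a := b)]
        gcongr
        exacts [gdist_le_weight G w ha, gdist_le_weight G w hb.symm]

lemma gdist_add_gdist_add_gdist_le_walkWeight {s a b t : V}
    (p₁ : G.Walk s a) (p₂ : G.Walk a b) (p₃ : G.Walk b t) :
    gdist G w s a + gdist G w a b + gdist G w b t ≤
      walkWeight G w (p₁.append (p₂.append p₃)) := by
  rw [walkWeight_append, walkWeight_append, ← add_assoc]
  gcongr <;> exact gdist_le_walkWeight G w _

lemma gdist_le_detour {s t u₁ u₂ v₁ v₂ : V} (hv₁ : G.Adj u₁ v₁) (hv₂ : G.Adj u₂ v₂) :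
    gdist G w s t ≤
      gdist G w s u₁ + w s(u₁, v₁) + gdist G w v₁ v₂ + w s(u₂, v₂) + gdist G w u₂ t :=
  calc gdist G w s t ≤ gdist G w s u₁ + gdist G w u₁ u₂ + gdist G w u₂ t :=
        (gdist_triangle G w s u₂ t).trans (add_le_add_left (gdist_triangle G w s u₁ u₂) _)
    _ ≤ gdist G w s u₁ + (w s(u₁, v₁) + gdist G w v₁ v₂ + w s(u₂, v₂)) + gdist G w u₂ t := by
        gcongr
        exact gdist_le_weight_add_gdist_add_weight G w hv₁ hv₂
    _ = _ := by ring

end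

theorem detour_four_W_general
    (V : Type) (G : SimpleGraph V) (w : Sym2 V → ℝ≥0∞)
    (π : (s t : V) → G.Walk s t) (hπ : IsShortestPathScheme G w π)
    (s t u₁ u₂ v₁ v₂ : V)
    (p₁ : G.Walk s u₁) (p₂ : G.Walk u₁ u₂) (p₃ : G.Walk u₂ t)
    (horder : π s t = p₁.append (p₂.append p₃))
    (hv₁ : G.Adj u₁ v₁) (hwv₁ : w s(u₁, v₁) ≤ maxEdge G w (π s t))
    (hv₂ : G.Adj u₂ v₂) (hwv₂ : w s(u₂, v₂) ≤ maxEdge G w (π s t)) :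
    gdist G w s u₁ + w s(u₁, v₁) + gdist G w v₁ v₂ + w s(u₂, v₂) + gdist G w u₂ t ≤
        gdist G w s t + 4 * maxEdge G w (π s t) ∧
      ∀ H : SimpleGraph V, H ≤ G →
        H.Adj u₁ v₁ → H.Adj u₂ v₂ →
        gdist H w s u₁ ≤ gdist G w s u₁ →
        gdist H w v₁ v₂ ≤ gdist G w v₁ v₂ →
        gdist H w u₂ t ≤ gdist G w u₂ t →
        gdist H w s t ≤ gdist G w s t + 4 * maxEdge G w (π s t) := by
  set W := maxEdge G w (π s t)
  have hsplit : gdist G w s u₁ + gdist G w u₁ u₂ + gdist G w u₂ t ≤ gdist G w s t := by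
    rw [← hπ s t, horder]
    exact gdist_add_gdist_add_gdist_le_walkWeight G w p₁ p₂ p₃
  have hmiddle : gdist G w v₁ v₂ ≤ w s(u₁, v₁) + gdist G w u₁ u₂ + w s(u₂, v₂) := by
    rw [Sym2.eq_swap (a := u₁), Sym2.eq_swap (a := u₂)]
    exact gdist_le_weight_add_gdist_add_weight G w hv₁.symm hv₂.symm
  have hdetour :
      gdist G w s u₁ + w s(u₁, v₁) + gdist G w v₁ v₂ + w s(u₂, v₂) + gdist G w u₂ t ≤
        gdist G w s t + 4 * W :=
    calc _ ≤ gdist G w s u₁ + w s(u₁, v₁) + (w s(u₁, v₁) + gdist G w u₁ u₂ + w s(u₂, v₂)) +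
            w s(u₂, v₂) + gdist G w u₂ t := by gcongr
      _ = (gdist G w s u₁ + gdist G w u₁ u₂ + gdist G w u₂ t) +
            (w s(u₁, v₁) + w s(u₁, v₁) + w s(u₂, v₂) + w s(u₂, v₂)) := by ring
      _ ≤ gdist G w s t + (W + W + W + W) := by gcongr
      _ = gdist G w s t + 4 * W := by ring
  refine ⟨hdetour, fun H _ hH₁ hH₂ hsu₁ hv₁v₂ hu₂t => ?_⟩
  calc gdist H w s t
      ≤ gdist H w s u₁ + w s(u₁, v₁) + gdist H w v₁ v₂ + w s(u₂, v₂) + gdist H w u₂ t :=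
        gdist_le_detour H w hH₁ hH₂
    _ ≤ gdist G w s u₁ + w s(u₁, v₁) + gdist G w v₁ v₂ + w s(u₂, v₂) + gdist G w u₂ t := by
        gcongr
    _ ≤ gdist G w s t + 4 * W := hdetour

/-- Let `u₁, u₂` lie in this order on `π(s,t)`, and let `v₁, v₂` be joined
in `G` to `u₁, u₂` respectively by edges of weight at most `W(s,t)`. Then
`d_G(s,u₁) + w(u₁v₁) + d_G(v₁,v₂) + w(u₂v₂) + d_G(u₂,t) ≤ d_G(s,t) + 4·W(s,t)`.
In particular, if a subgraph `H` contains shortest paths of `G` from `s` to `u₁`, from `v₁`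
to `v₂` and from `u₂` to `t`, together with the edges `u₁v₁` and `u₂v₂`, then
`d_H(s,t) ≤ d_G(s,t) + 4·W(s,t)`. -/
theorem detour_four_W
    (V : Type) [Fintype V] (G : SimpleGraph V) (w : Sym2 V → ℝ≥0∞)
    (hconn : G.Connected) (hw : PosWeights G w)
    (π : (s t : V) → G.Walk s t) (hπ : IsShortestPathScheme G w π)
    (s t u₁ u₂ v₁ v₂ : V)
    (p₁ : G.Walk s u₁) (p₂ : G.Walk u₁ u₂) (p₃ : G.Walk u₂ t)
    (horder : π s t = p₁.append (p₂.append p₃))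
    (hv₁ : G.Adj u₁ v₁) (hwv₁ : w s(u₁, v₁) ≤ maxEdge G w (π s t))
    (hv₂ : G.Adj u₂ v₂) (hwv₂ : w s(u₂, v₂) ≤ maxEdge G w (π s t)) :
    gdist G w s u₁ + w s(u₁, v₁) + gdist G w v₁ v₂ + w s(u₂, v₂) + gdist G w u₂ t ≤
        gdist G w s t + 4 * maxEdge G w (π s t) ∧
      ∀ H : SimpleGraph V, H ≤ G →
        H.Adj u₁ v₁ → H.Adj u₂ v₂ →
        gdist H w s u₁ ≤ gdist G w s u₁ →
        gdist H w v₁ v₂ ≤ gdist G w v₁ v₂ →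
        gdist H w u₂ t ≤ gdist G w u₂ t →
        gdist H w s t ≤ gdist G w s t + 4 * maxEdge G w (π s t) :=
  detour_four_W_general V G w π hπ s t u₁ u₂ v₁ v₂ p₁ p₂ p₃ horder hv₁ hwv₁ hv₂ hwv₂
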